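/- Let V be a finite-dimensional real inner product space, λ₀ ∈ ℝ, and let ℓ : J → Sym(V) be a C¹ path of symmetric linear operators on V defined on an open interval J containing λ₀, with ℓ_{λ₀} = 0 and with the derivative ℓ̇_{λ₀} invertible. Then there exists δ > 0 such that for all a, b ∈ J with λ₀ − δ < a < λ₀ < b < λ₀ + δ, the operators ℓ_a and ℓ_b are invertible and μ(ℓ_a) − μ(ℓ_b) = sgn(ℓ̇_{λ₀}), where μ denotes the number of negative eigenvalues counted with multiplicity and sgn denotes the signature (number of positive eigenvalues minus number of negative eigenvalues). -/

import Mathlib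

open Set

noncomputable section

variable {V : Type*} [NormedAddCommGroup V] [InnerProductSpace ℝ V] [FiniteDimensional ℝ V]

/-- The number of negative eigenvalues of an operator `A` on a finite-dimensional real inner
product space, counted with multiplicity. -/
def negEigCount (A : V →L[ℝ] V) : ℕ :=
  ∑ᶠ r ∈ {r : ℝ | r < 0}, Module.finrank ℝ ↥(LinearMap.ker ((A - r • (1 : V →L[ℝ] V) : V →L[ℝ] V) : V →ₗ[ℝ] V))

/-- The signature of a symmetric operator `A`: the number of positive eigenvalues minus the
number of negative eigenvalues, counted with multiplicity. -/
def signature (A : V →L[ℝ] V) : ℤ :=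
  (negEigCount (-A) : ℤ) - (negEigCount A : ℤ)

/-!
Writing `ℓ t = (t - l₀) • slope ℓ l₀ t`, the slopes tend to `D = ℓ̇_{l₀}`, a selfadjoint
isomorphism, and `μ(ℓ a) = μ(-slope ℓ l₀ a)`, `μ(ℓ b) = μ(slope ℓ l₀ b)` for `a < l₀ < b`. The Morse
index is locally constant near `D`: by Sylvester's law of inertia it is the largest dimension of a
subspace on which `x ↦ ⟪A x, x⟫` is negative definite, and by compactness of the unit sphere the
quadratic form stays definite on the negative and positive subspaces of `D` under small
perturbations. Hence `μ(ℓ a) - μ(ℓ b) = μ(-D) - μ(D) = sgn D`.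
-/

open Filter Topology QuadraticForm QuadraticMap
open scoped RealInnerProductSpace

theorem IsUnit.smul_of_ne_zero {G₀ M : Type*} [GroupWithZero G₀] [Monoid M] [MulAction G₀ M]
    [SMulCommClass G₀ M M] [IsScalarTower G₀ M M] {t : G₀} (ht : t ≠ 0) {m : M} (hm : IsUnit m) :
    IsUnit (t • m) := by
  simpa using hm.smul (Units.mk0 t ht)

theorem isSelfAdjoint_slope {E : Type*} [AddCommGroup E] [Module ℝ E] [StarAddMonoid E]
    [StarModule ℝ E] {f : ℝ → E} {a b : ℝ} (ha : IsSelfAdjoint (f a)) (hb : IsSelfAdjoint (f b)) :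
    IsSelfAdjoint (slope f a b) := by
  rw [slope_def_module]
  exact (IsSelfAdjoint.all _).smul (hb.sub ha)

theorem HasDerivAt.isSelfAdjoint {E : Type*} [NormedAddCommGroup E] [NormedSpace ℝ E]
    [StarAddMonoid E] [StarModule ℝ E] [ContinuousStar E] {f : ℝ → E} {f' : E} {x : ℝ}
    (hf : HasDerivAt f f' x) (hsa : ∀ᶠ y in 𝓝 x, IsSelfAdjoint (f y)) : IsSelfAdjoint f' :=
  (isClosed_eq continuous_star continuous_id).mem_of_tendsto (hasDerivAt_iff_tendsto_slope.mp hf)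
    ((eventually_nhdsWithin_of_eventually_nhds hsa).mono fun _ hy =>
      isSelfAdjoint_slope hsa.self_of_nhds hy)

theorem QuadraticMap.PosDef.exists_pos_mul_norm_sq_le {F : Type*} [NormedAddCommGroup F]
    [NormedSpace ℝ F] [FiniteDimensional ℝ F] {Q : QuadraticForm ℝ F} (hQ : Q.PosDef)
    (hcont : Continuous Q) : ∃ c > 0, ∀ x, c * ‖x‖ ^ 2 ≤ Q x := by
  obtain ⟨c, hc, hcQ⟩ := (isCompact_sphere (0 : F) 1).exists_forall_le' hcont.continuousOn
    fun x hx => hQ x (ne_zero_of_mem_unit_sphere ⟨x, hx⟩)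
  refine ⟨c, hc, fun x => ?_⟩
  rcases eq_or_ne x 0 with rfl | hx
  · simp
  · have hx' : 0 < ‖x‖ := norm_pos_iff.mpr hx
    have hunit := hcQ (‖x‖⁻¹ • x) (by simp [norm_smul, hx'.ne'])
    rw [QuadraticMap.map_smul, smul_eq_mul] at hunit
    calc c * ‖x‖ ^ 2 ≤ ‖x‖⁻¹ * ‖x‖⁻¹ * Q x * ‖x‖ ^ 2 := by gcongr
      _ = Q x := by field_simp

theorem QuadraticForm.sigNeg_eq_finrank_and_radical_eq_bot {𝕜 M : Type*} [Field 𝕜]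
    [LinearOrder 𝕜] [IsStrictOrderedRing 𝕜] [AddCommGroup M] [Module 𝕜 M] [FiniteDimensional 𝕜 M]
    {Q : QuadraticForm 𝕜 M} {Wn Wp : Submodule 𝕜 M} (hWn : ((-Q).restrict Wn).PosDef)
    (hWp : (Q.restrict Wp).PosDef)
    (hdim : Module.finrank 𝕜 Wn + Module.finrank 𝕜 Wp = Module.finrank 𝕜 M) :
    sigNeg Q = Module.finrank 𝕜 Wn ∧ Q.radical = ⊥ := by
  have hn := le_sigNeg_of_negDef Q hWn
  have hp := le_sigPos_of_posDef Q hWp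
  have hsum := sigPos_add_sigNeg_add_radical (Q := Q)
  exact ⟨by omega, Submodule.finrank_eq_zero.mp (by omega)⟩

namespace ContinuousLinearMap

variable {E : Type*} [NormedAddCommGroup E] [InnerProductSpace ℝ E]

def innerQuadraticForm (A : E →L[ℝ] E) : QuadraticForm ℝ E :=
  LinearMap.BilinMap.toQuadraticMap ((innerₗ E).comp (A : E →ₗ[ℝ] E))

@[simp]
theorem innerQuadraticForm_apply (A : E →L[ℝ] E) (x : E) :
    A.innerQuadraticForm x = ⟪A x, x⟫ :=
  rfl

@[simp]
theorem innerQuadraticForm_neg (A : E →L[ℝ] E) :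
    (-A).innerQuadraticForm = -A.innerQuadraticForm := by
  ext x
  simp

theorem polar_innerQuadraticForm {A : E →L[ℝ] E} (hA : (A : E →ₗ[ℝ] E).IsSymmetric) (x y : E) :
    polar A.innerQuadraticForm x y = 2 * ⟪A x, y⟫ := by
  have hyx : ⟪A y, x⟫ = ⟪A x, y⟫ := (real_inner_comm x (A y)).trans (hA x y).symm
  simp only [polar, innerQuadraticForm_apply, map_add, inner_add_left, inner_add_right, hyx]
  ring

theorem radical_innerQuadraticForm {A : E →L[ℝ] E} (hA : (A : E →ₗ[ℝ] E).IsSymmetric) :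
    A.innerQuadraticForm.radical = LinearMap.ker (A : E →ₗ[ℝ] E) := by
  ext x
  simp only [radical_eq_ker_polarBilin, LinearMap.mem_ker, LinearMap.ext_iff,
    polarBilin_apply_apply, polar_innerQuadraticForm hA, LinearMap.zero_apply, coe_coe]
  exact ⟨fun h => by simpa using h (A x), fun h y => by simp [h]⟩

theorem eventually_posDef_restrict_innerQuadraticForm {D : E →L[ℝ] E} {W : Submodule ℝ E}
    [FiniteDimensional ℝ W] (hD : (D.innerQuadraticForm.restrict W).PosDef) :
    ∀ᶠ A in 𝓝 D, (A.innerQuadraticForm.restrict W).PosDef := by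
  obtain ⟨c, hc, hcD⟩ := hD.exists_pos_mul_norm_sq_le
    (show Continuous fun x : W => ⟪D x, x⟫ by fun_prop)
  filter_upwards [Metric.ball_mem_nhds D hc] with A hA x hx
  have hDx : c * ‖(x : E)‖ ^ 2 ≤ ⟪D x, x⟫ := hcD x
  have hdiff : ⟪(D - A) x, x⟫ ≤ ‖D - A‖ * ‖(x : E)‖ ^ 2 :=
    calc ⟪(D - A) x, x⟫ ≤ ‖(D - A) x‖ * ‖(x : E)‖ := real_inner_le_norm _ _
      _ ≤ ‖D - A‖ * ‖(x : E)‖ * ‖(x : E)‖ := by gcongr; exact (D - A).le_opNorm x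
      _ = ‖D - A‖ * ‖(x : E)‖ ^ 2 := by ring
  have hgap : 0 < (c - ‖D - A‖) * ‖(x : E)‖ ^ 2 := by
    rw [Metric.mem_ball, dist_eq_norm, norm_sub_rev] at hA
    have : (x : E) ≠ 0 := by simpa using hx
    positivity
  rw [sub_apply, inner_sub_left] at hdiff
  simp only [QuadraticMap.restrict_apply, innerQuadraticForm_apply]
  nlinarith

end ContinuousLinearMap

open ContinuousLinearMap

theorem negEigCount_smul {E : Type*} [NormedAddCommGroup E] [InnerProductSpace ℝ E]
    {A : E →L[ℝ] E} {t : ℝ} (ht : 0 < t) : negEigCount (t • A) = negEigCount A := by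
  refine finsum_mem_eq_of_bijOn (fun r => t⁻¹ * r)
    ⟨fun r hr => ?_, fun r _ s _ h => ?_, fun r hr => ?_⟩ fun r _ => ?_
  · exact mul_neg_of_pos_of_neg (inv_pos.2 ht) hr
  · exact mul_left_cancel₀ (inv_ne_zero ht.ne') h
  · exact ⟨t * r, mul_neg_of_pos_of_neg ht hr, by field_simp⟩
  · have hfactor : t • A - r • (1 : E →L[ℝ] E) = t • (A - (t⁻¹ * r) • 1) := by
      rw [smul_sub, smul_smul, mul_inv_cancel_left₀ ht.ne']
    rw [hfactor, toLinearMap_smul, LinearMap.ker_smul _ _ ht.ne']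

theorem negEigCount_eq_card_eigenvalues {A : V →L[ℝ] V} (hA : IsSelfAdjoint A) {n : ℕ}
    (hn : Module.finrank ℝ V = n) :
    negEigCount A = Finset.card {i | hA.isSymmetric.eigenvalues hn i < 0} := by
  classical
  set μ := hA.isSymmetric.eigenvalues hn
  have hfiber (r : ℝ) : Module.finrank ℝ
      (LinearMap.ker ((A - r • (1 : V →L[ℝ] V) : V →L[ℝ] V) : V →ₗ[ℝ] V)) =
        Finset.card {i | μ i = r} := by
    have hker : LinearMap.ker ((A - r • (1 : V →L[ℝ] V) : V →L[ℝ] V) : V →ₗ[ℝ] V) =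
        Module.End.eigenspace (A : V →ₗ[ℝ] V) r := by
      ext x
      simp [sub_eq_zero]
    rw [hker]
    simpa using (hA.isSymmetric.card_filter_eigenvalues_eq hn r).symm
  rw [negEigCount, finsum_mem_congr rfl fun r _ => hfiber r,
    finsum_mem_eq_sum_of_inter_support_eq _ (t := {r ∈ Finset.univ.image μ | r < 0}),
    Finset.sum_card_fiberwise_eq_card_filter]
  · simp
  · ext r
    simpa using fun i hi _ => ⟨i, hi⟩

theorem innerQuadraticForm_equivalent_weightedSumSquares {A : V →L[ℝ] V} (hA : IsSelfAdjoint A)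
    {n : ℕ} (hn : Module.finrank ℝ V = n) :
    A.innerQuadraticForm.Equivalent (weightedSumSquares ℝ (hA.isSymmetric.eigenvalues hn)) := by
  let b := hA.isSymmetric.eigenvectorBasis hn
  refine ⟨{ b.repr.toLinearEquiv.trans (WithLp.linearEquiv 2 ℝ (Fin n → ℝ)) with
    map_app' := fun x => ?_ }⟩
  rw [innerQuadraticForm_apply, ← b.repr.inner_map_map, PiLp.inner_apply]
  simp only [weightedSumSquares_apply]
  refine Finset.sum_congr rfl fun i _ => ?_
  have hdiag := hA.isSymmetric.eigenvectorBasis_apply_self_apply hn x i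
  simp only [coe_coe] at hdiag
  simp [b, hdiag, mul_left_comm]

theorem negEigCount_eq_sigNeg {A : V →L[ℝ] V} (hA : IsSelfAdjoint A) :
    negEigCount A = sigNeg A.innerQuadraticForm := by
  rw [negEigCount_eq_card_eigenvalues hA rfl,
    sigNeg_of_equiv_weightedSumSquares (innerQuadraticForm_equivalent_weightedSumSquares hA rfl),
    Set.ncard_eq_toFinset_card']
  simp

theorem isUnit_iff_radical_innerQuadraticForm_eq_bot {A : V →L[ℝ] V} (hA : IsSelfAdjoint A) :
    IsUnit A ↔ A.innerQuadraticForm.radical = ⊥ := by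
  rw [isUnit_iff_isUnit_toLinearMap, LinearMap.isUnit_iff_ker_eq_bot,
    radical_innerQuadraticForm hA.isSymmetric]

theorem eventually_isUnit_and_negEigCount_eq {D : V →L[ℝ] V} (hD : IsSelfAdjoint D)
    (hDu : IsUnit D) :
    ∀ᶠ A in 𝓝 D, IsSelfAdjoint A → IsUnit A ∧ negEigCount A = negEigCount D := by
  obtain ⟨Wn, hWn, hnegD⟩ := exists_finrank_eq_sigNeg_and_negDef D.innerQuadraticForm
  obtain ⟨Wp, hWp, hposD⟩ := exists_finrank_eq_sigPos_and_posDef D.innerQuadraticForm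
  have hdim : Module.finrank ℝ Wn + Module.finrank ℝ Wp = Module.finrank ℝ V := by
    have hsum := sigPos_add_sigNeg_add_radical (Q := D.innerQuadraticForm)
    rw [(isUnit_iff_radical_innerQuadraticForm_eq_bot hD).mp hDu, finrank_bot] at hsum
    omega
  rw [← innerQuadraticForm_neg] at hnegD
  filter_upwards [(tendsto_neg D).eventually (eventually_posDef_restrict_innerQuadraticForm hnegD),
    eventually_posDef_restrict_innerQuadraticForm hposD] with A hAn hAp hA
  rw [innerQuadraticForm_neg] at hAn
  obtain ⟨hsig, hrad⟩ := sigNeg_eq_finrank_and_radical_eq_bot hAn hAp hdim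
  exact ⟨(isUnit_iff_radical_innerQuadraticForm_eq_bot hA).mpr hrad, by
    rw [negEigCount_eq_sigNeg hA, negEigCount_eq_sigNeg hD, hsig, hWn]⟩

/-- Finite-dimensional reduction near a regular crossing: if `ℓ` is a `C¹` path of symmetric
operators on an open interval `J ∋ l₀` with `ℓ_{l₀} = 0` and invertible derivative
`ℓ̇_{l₀}`, then for all `a < l₀ < b` in `J` close enough to `l₀` the operators `ℓ_a, ℓ_b` are
invertible and `μ(ℓ_a) − μ(ℓ_b) = sgn(ℓ̇_{l₀})`. -/
theorem morse_index_jump_eq_signature_of_derivative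
    (α β l₀ : ℝ) (hmem : l₀ ∈ Ioo α β)
    (ℓ : ℝ → (V →L[ℝ] V)) (hC1 : ContDiffOn ℝ 1 ℓ (Ioo α β))
    (hsym : ∀ l ∈ Ioo α β, IsSelfAdjoint (ℓ l))
    (h0 : ℓ l₀ = 0) (hinv : IsUnit (deriv ℓ l₀)) :
    ∃ δ > (0:ℝ), ∀ a b : ℝ, a ∈ Ioo α β → b ∈ Ioo α β →
      l₀ - δ < a → a < l₀ → l₀ < b → b < l₀ + δ →
      IsUnit (ℓ a) ∧ IsUnit (ℓ b) ∧
        (negEigCount (ℓ a) : ℤ) - (negEigCount (ℓ b) : ℤ) = signature (deriv ℓ l₀) := by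
  set D := deriv ℓ l₀
  have hJ : Ioo α β ∈ 𝓝 l₀ := isOpen_Ioo.mem_nhds hmem
  have hℓ : HasDerivAt ℓ D l₀ :=
    ((hC1.differentiableOn one_ne_zero) l₀ hmem |>.differentiableAt hJ).hasDerivAt
  have hsa : ∀ᶠ l in 𝓝 l₀, IsSelfAdjoint (ℓ l) := eventually_of_mem hJ hsym
  have hD : IsSelfAdjoint D := hℓ.isSelfAdjoint hsa
  have hslope := hasDerivAt_iff_tendsto_slope.mp hℓ
  have hslope_sa : ∀ᶠ t in 𝓝[≠] l₀, IsSelfAdjoint (slope ℓ l₀ t) :=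
    (eventually_nhdsWithin_of_eventually_nhds hsa).mono fun _ ht =>
      isSelfAdjoint_slope hsa.self_of_nhds ht
  have hright : ∀ᶠ t in 𝓝[≠] l₀,
      IsUnit (slope ℓ l₀ t) ∧ negEigCount (slope ℓ l₀ t) = negEigCount D :=
    hslope_sa.mp (hslope.eventually (eventually_isUnit_and_negEigCount_eq hD hinv))
  have hleft : ∀ᶠ t in 𝓝[≠] l₀,
      IsUnit (-slope ℓ l₀ t) ∧ negEigCount (-slope ℓ l₀ t) = negEigCount (-D) :=
    hslope_sa.mp ((hslope.neg.eventually
      (eventually_isUnit_and_negEigCount_eq hD.neg hinv.neg)).mono fun _ h ht => h ht.neg)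
  obtain ⟨δ, hδ, hnear⟩ :=
    Metric.eventually_nhds_iff.mp (eventually_nhdsWithin_iff.mp (hright.and hleft))
  refine ⟨δ, hδ, fun a b _ _ ha₁ ha₂ hb₁ hb₂ => ?_⟩
  have hℓa : ℓ a = (l₀ - a) • -slope ℓ l₀ a := by
    rw [smul_neg, ← neg_smul, neg_sub, sub_smul_slope, h0, vsub_eq_sub, sub_zero]
  have hℓb : ℓ b = (b - l₀) • slope ℓ l₀ b := by
    rw [sub_smul_slope, h0, vsub_eq_sub, sub_zero]
  obtain ⟨-, hua, hna⟩ := hnear (by rw [Real.dist_eq, abs_lt]; constructor <;> linarith) ha₂.ne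
  obtain ⟨⟨hub, hnb⟩, -⟩ := hnear (by rw [Real.dist_eq, abs_lt]; constructor <;> linarith) hb₁.ne'
  refine ⟨hℓa ▸ hua.smul_of_ne_zero (sub_pos.2 ha₂).ne',
    hℓb ▸ hub.smul_of_ne_zero (sub_pos.2 hb₁).ne', ?_⟩
  rw [hℓa, hℓb, negEigCount_smul (sub_pos.2 ha₂), negEigCount_smul (sub_pos.2 hb₁), hna, hnb,
    signature]
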